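/- Under these assumptions, the Hessian matrix V₂ of E at 0 is symmetric and satisfies the Riccati equation Aᵀ V₂ + V₂ A − η · Cᵀ C + V₂ B Bᵀ V₂ = 0. (Quadratic-coefficient part of Theorem 7.) -/

import Mathlib

open Matrix
open scoped RealInnerProductSpace

noncomputable section

/-- Reinterpret a plain vector in `Fin n → ℝ` as an element of Euclidean space. -/
def toEuc {n : ℕ} (v : Fin n → ℝ) : EuclideanSpace ℝ (Fin n) := WithLp.toLp 2 v

/-!
Substitute `t • x` into the HJB equation. Since `∇E(0) = 0`, `t⁻¹ • ∇E(t • x)` tends to `V₂ x` as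
`t → 0`, and the equation at `t • x` is `t²` times the HJB residual at `(t⁻¹ • ∇E(t • x), x)` with
`N` replaced by `t • N`, the bilinear term being one order higher. In the limit,
`⟪V₂ x, A x⟫ + ½‖Bᵀ V₂ x‖² - (η/2)‖C x‖² = 0`: the quadratic form of the symmetric Riccati matrix
vanishes, so by polarization the matrix does. Symmetry of `V₂` is symmetry of second derivatives.
-/

open Filter Topology InnerProductSpace

theorem Matrix.IsSymm.eq_zero_of_dotProduct_mulVec_self {K ι : Type*} [Field K] [NeZero (2 : K)]
    [Fintype ι] {M : Matrix ι ι K} (hM : M.IsSymm)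
    (h : ∀ x, x ⬝ᵥ (M *ᵥ x) = 0) : M = 0 := by
  classical
  refine toBilin'.injective ?_
  rw [map_zero]
  exact LinearMap.BilinForm.ext_of_isSymm (isSymm_toBilin'_iff_isSymm.2 hM)
    LinearMap.BilinForm.isSymm_zero fun x => by simpa [toBilin'_apply'] using h x

section Riccati

variable {R ι κ μ : Type*} [CommRing R] [Fintype ι] [Fintype κ] [Fintype μ]

theorem dotProduct_transpose_mul_mulVec (M N : Matrix κ ι R) (x : ι → R) :
    x ⬝ᵥ ((Mᵀ * N) *ᵥ x) = (M *ᵥ x) ⬝ᵥ (N *ᵥ x) := by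
  rw [← mulVec_mulVec, dotProduct_mulVec, vecMul_transpose]

variable (A : Matrix ι ι R) (B : Matrix ι κ R) (C : Matrix μ ι R) (η : R) (V : Matrix ι ι R)

def riccati : Matrix ι ι R :=
  Aᵀ * V + V * A - η • (Cᵀ * C) + V * B * Bᵀ * V

variable {A B C η V}

theorem isSymm_riccati (hV : V.IsSymm) : (riccati A B C η V).IsSymm := by
  rw [Matrix.IsSymm, riccati]
  simp only [transpose_add, transpose_sub, transpose_mul, transpose_smul, transpose_transpose,
    hV.eq, Matrix.mul_assoc]
  abel

theorem dotProduct_riccati_mulVec (hV : V.IsSymm) (x : ι → R) :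
    x ⬝ᵥ (riccati A B C η V *ᵥ x) =
      2 * ((V *ᵥ x) ⬝ᵥ (A *ᵥ x)) + (Bᵀ *ᵥ (V *ᵥ x)) ⬝ᵥ (Bᵀ *ᵥ (V *ᵥ x))
        - η * ((C *ᵥ x) ⬝ᵥ (C *ᵥ x)) := by
  have hVA : V * A = Vᵀ * A := by rw [hV.eq]
  have hVBBV : V * B * Bᵀ * V = (Bᵀ * V)ᵀ * (Bᵀ * V) := by
    rw [transpose_mul, hV.eq, transpose_transpose, Matrix.mul_assoc, Matrix.mul_assoc]
  simp only [riccati, hVA, hVBBV, add_mulVec, sub_mulVec, smul_mulVec, dotProduct_add,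
    dotProduct_sub, dotProduct_smul, dotProduct_transpose_mul_mulVec, smul_eq_mul,
    dotProduct_comm (A *ᵥ x), mulVec_mulVec]
  ring

end Riccati

section HJB

variable {V W U : Type*} [NormedAddCommGroup V] [InnerProductSpace ℝ V]
  [NormedAddCommGroup W] [NormedSpace ℝ W] [NormedAddCommGroup U] [NormedSpace ℝ U]
  (a : V →L[ℝ] V) (b : V →L[ℝ] W) (c : V →L[ℝ] U) (N : V →L[ℝ] V →L[ℝ] V) (η : ℝ)

def hjbResidual (g x : V) : ℝ :=
  ⟪g, a x + N x x⟫ + 1 / 2 * ‖b g‖ ^ 2 - η / 2 * ‖c x‖ ^ 2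

theorem hjbResidual_smul_smul (t : ℝ) (g x : V) :
    hjbResidual a b c N η (t • g) (t • x) = t ^ 2 * hjbResidual a b c (t • N) η g x := by
  simp only [hjbResidual, map_smul, _root_.smul_apply, smul_smul, real_inner_smul_left,
    inner_add_right, real_inner_smul_right, norm_smul, mul_pow, Real.norm_eq_abs, sq_abs]
  ring

theorem hjbResidual_zero_eq_zero_of_hasFDerivAt {g : V → V} {L : V →L[ℝ] V}
    (hg : HasFDerivAt g L 0) (hg0 : g 0 = 0)
    (hHJB : ∀ᶠ x in 𝓝 0, hjbResidual a b c N η (g x) x = 0) (x : V) :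
    hjbResidual a b c 0 η (L x) x = 0 := by
  set Φ : V × ℝ → ℝ := fun q => hjbResidual a b c (q.2 • N) η q.1 x
  have hΦ : Continuous Φ := by simp only [Φ, hjbResidual]; fun_prop
  have hslope : Tendsto (fun t : ℝ => t⁻¹ • g (t • x)) (𝓝[≠] 0) (𝓝 (L x)) := by
    simpa [hg0] using (hg.hasLineDerivAt x).tendsto_slope_zero
  have hlim : Tendsto (fun t : ℝ => Φ (t⁻¹ • g (t • x), t)) (𝓝[≠] 0) (𝓝 (Φ (L x, 0))) :=
    (hΦ.tendsto _).comp (hslope.prodMk_nhds (tendsto_id.mono_left nhdsWithin_le_nhds))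
  have hline : Tendsto (fun t : ℝ => t • x) (𝓝[≠] 0) (𝓝 0) :=
    ((continuous_id.smul continuous_const).tendsto' 0 0 (zero_smul ℝ x)).mono_left
      nhdsWithin_le_nhds
  have hzero : ∀ᶠ t in 𝓝[≠] (0 : ℝ), Φ (t⁻¹ • g (t • x), t) = 0 := by
    filter_upwards [hline.eventually hHJB, self_mem_nhdsWithin] with t ht ht0
    have hscale := hjbResidual_smul_smul a b c N η t (t⁻¹ • g (t • x)) x
    rw [smul_inv_smul₀ ht0, ht] at hscale
    exact (mul_eq_zero.1 hscale.symm).resolve_left (pow_ne_zero 2 ht0)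
  have hΦ0 : Φ (L x, 0) = 0 :=
    tendsto_nhds_unique hlim (tendsto_const_nhds.congr' (hzero.mono fun _ => Eq.symm))
  rwa [← zero_smul ℝ N]

end HJB

namespace EuclideanSpace

variable {ι : Type*} [Fintype ι] [DecidableEq ι]

theorem toDual_symm_apply_eq_toLp (f : StrongDual ℝ (EuclideanSpace ℝ ι)) :
    (toDual ℝ (EuclideanSpace ℝ ι)).symm f = WithLp.toLp 2 fun j => f (single j 1) := by
  ext j
  have h := toDual_symm_apply (𝕜 := ℝ) (x := single j (1 : ℝ)) (y := f)
  rw [inner_single_right, one_mul] at h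
  simpa using h

def hessianMatrix (E : EuclideanSpace ℝ ι → ℝ) (x : EuclideanSpace ℝ ι) : Matrix ι ι ℝ :=
  of fun i j => iteratedFDeriv ℝ 2 E x ![single i 1, single j 1]

variable {E : EuclideanSpace ℝ ι → ℝ} {x : EuclideanSpace ℝ ι}

theorem hessianMatrix_apply (i j : ι) :
    hessianMatrix E x i j = fderiv ℝ (fderiv ℝ E) x (single i 1) (single j 1) := by
  rw [hessianMatrix, of_apply, iteratedFDeriv_two_apply]
  rfl

theorem isSymm_hessianMatrix (hE : ContDiffAt ℝ 2 E x) : (hessianMatrix E x).IsSymm :=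
  IsSymm.ext fun i j => by
    rw [hessianMatrix_apply, hessianMatrix_apply]
    exact hE.isSymmSndFDerivAt (by simp) _ _

theorem hasFDerivAt_gradient (hE : ContDiffAt ℝ 2 E x) :
    HasFDerivAt (gradient E) (toEuclideanLin (hessianMatrix E x)).toContinuousLinearMap x := by
  have hD : HasFDerivAt (fderiv ℝ E) (fderiv ℝ (fderiv ℝ E) x) x :=
    ((hE.fderiv_right (m := 1) le_rfl).differentiableAt one_ne_zero).hasFDerivAt
  refine ((toDual ℝ _).symm.toContinuousLinearEquiv.hasFDerivAt.comp x hD).congr_fderiv ?_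
  ext v j
  simp only [ContinuousLinearMap.comp_apply, ContinuousLinearEquiv.coe_coe,
    LinearIsometryEquiv.coe_toContinuousLinearEquiv, toDual_symm_apply_eq_toLp,
    LinearMap.coe_toContinuousLinearMap', toLpLin_apply]
  rw [hE.isSymmSndFDerivAt (by simp) v]
  conv_lhs => rw [← (basisFun ι ℝ).toBasis.sum_repr v]
  simp [mulVec, dotProduct, hessianMatrix_apply, mul_comm]

end EuclideanSpace

theorem past_energy_quadratic_coefficient_general
    {n m p : ℕ}
    (A : Matrix (Fin n) (Fin n) ℝ) (B : Matrix (Fin n) (Fin m) ℝ)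
    (C : Matrix (Fin p) (Fin n) ℝ)
    (N : EuclideanSpace ℝ (Fin n) →L[ℝ] EuclideanSpace ℝ (Fin n) →L[ℝ] EuclideanSpace ℝ (Fin n))
    (η : ℝ)
    (E : EuclideanSpace ℝ (Fin n) → ℝ)
    (hE : AnalyticAt ℝ E 0)
    (hdE : fderiv ℝ E 0 = 0)
    (hHJB : ∀ᶠ x in nhds (0 : EuclideanSpace ℝ (Fin n)),
      ⟪gradient E x, toEuc (A.mulVec x) + N x x⟫
        + (1 / 2) * ‖toEuc (Bᵀ.mulVec (gradient E x : EuclideanSpace ℝ (Fin n)))‖ ^ 2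
        - (η / 2) * ‖toEuc (C.mulVec x)‖ ^ 2 = 0)
    (V₂ : Matrix (Fin n) (Fin n) ℝ)
    (hV₂ : ∀ i j, V₂ i j =
      iteratedFDeriv ℝ 2 E 0 ![EuclideanSpace.single i 1, EuclideanSpace.single j 1]) :
    V₂ᵀ = V₂ ∧ Aᵀ * V₂ + V₂ * A - η • (Cᵀ * C) + V₂ * B * Bᵀ * V₂ = 0 := by
  have hE2 : ContDiffAt ℝ 2 E 0 := hE.contDiffAt
  obtain rfl : V₂ = EuclideanSpace.hessianMatrix E 0 := Matrix.ext hV₂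
  have hsymm := EuclideanSpace.isSymm_hessianMatrix hE2
  have hgrad0 : gradient E 0 = 0 := by rw [gradient, hdE, map_zero]
  have hHJB' : ∀ᶠ x in 𝓝 0, hjbResidual (toEuclideanLin A).toContinuousLinearMap
      (toEuclideanLin Bᵀ).toContinuousLinearMap (toEuclideanLin C).toContinuousLinearMap N η
      (gradient E x) x = 0 := hHJB
  have hquad (x : Fin n → ℝ) := hjbResidual_zero_eq_zero_of_hasFDerivAt _ _ _ N η
    (EuclideanSpace.hasFDerivAt_gradient hE2) hgrad0 hHJB' (WithLp.toLp 2 x)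
  have hriccati : riccati A B C η (EuclideanSpace.hessianMatrix E 0) = 0 :=
    (isSymm_riccati hsymm).eq_zero_of_dotProduct_mulVec_self fun x => by
      have hx := hquad x
      simp only [hjbResidual, _root_.zero_apply, add_zero,
        LinearMap.coe_toContinuousLinearMap', toLpLin_toLp, toLin'_apply,
        ← real_inner_self_eq_norm_sq, EuclideanSpace.inner_toLp_toLp, star_trivial,
        dotProduct_comm (A *ᵥ x)] at hx
      rw [dotProduct_riccati_mulVec hsymm]
      linarith
  exact ⟨hsymm, hriccati⟩

/-- Quadratic-coefficient part of Theorem 7: the Hessian `V₂` of a solution `E`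
of the past H∞ HJB equation is symmetric and solves the Riccati equation
`AᵀV₂ + V₂A - η CᵀC + V₂BBᵀV₂ = 0`. -/
theorem past_energy_quadratic_coefficient
    {n m p : ℕ}
    (A : Matrix (Fin n) (Fin n) ℝ) (B : Matrix (Fin n) (Fin m) ℝ)
    (C : Matrix (Fin p) (Fin n) ℝ)
    (N : EuclideanSpace ℝ (Fin n) →L[ℝ] EuclideanSpace ℝ (Fin n) →L[ℝ] EuclideanSpace ℝ (Fin n))
    (η : ℝ)
    (E : EuclideanSpace ℝ (Fin n) → ℝ)
    (hE : AnalyticAt ℝ E 0)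
    (hE0 : E 0 = 0)
    (hdE : fderiv ℝ E 0 = 0)
    (hHJB : ∀ᶠ x in nhds (0 : EuclideanSpace ℝ (Fin n)),
      ⟪gradient E x, toEuc (A.mulVec x) + N x x⟫
        + (1 / 2) * ‖toEuc (Bᵀ.mulVec (gradient E x : EuclideanSpace ℝ (Fin n)))‖ ^ 2
        - (η / 2) * ‖toEuc (C.mulVec x)‖ ^ 2 = 0)
    (V₂ : Matrix (Fin n) (Fin n) ℝ)
    (hV₂ : ∀ i j, V₂ i j =
      iteratedFDeriv ℝ 2 E 0 ![EuclideanSpace.single i 1, EuclideanSpace.single j 1]) :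
    V₂ᵀ = V₂ ∧ Aᵀ * V₂ + V₂ * A - η • (Cᵀ * C) + V₂ * B * Bᵀ * V₂ = 0 :=
  past_energy_quadratic_coefficient_general A B C N η E hE hdE hHJB V₂ hV₂
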